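/- Let n ≥ 2, let a, b be real numbers with 1 + 2(n-1)a ≠ 0, and let R be an algebraic curvature tensor on ℝⁿ. Then scal(D_{a,b}(R)) = -4b·|Ric(R)|² + (4/n)(b + (n-1)a)·scal(R)² + [2(n²b² - 2(n-1)(a-b)(1-2b))/(1+2(n-1)a)]·|Ric₀(R)|², where |Ric(R)|² denotes the squared Frobenius norm of Ric(R). -/

import Mathlib

open scoped RealInnerProductSpace

noncomputable section

/-- Euclidean `n`-space. -/
abbrev En (n : ℕ) := EuclideanSpace ℝ (Fin n)

/-- Quadrilinear-form-valued objects (curvature-type tensors), given by their values. -/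
abbrev Curv4 (n : ℕ) := En n → En n → En n → En n → ℝ

/-- Bilinear-form-valued objects, given by their values. -/
abbrev Bil (n : ℕ) := En n → En n → ℝ

/-- The standard orthonormal basis vectors of `En n`. -/
def stdB (n : ℕ) (i : Fin n) : En n := EuclideanSpace.single i 1

/-- `R : Curv4 n` is multilinear, i.e. is the evaluation of a quadrilinear map. -/
def IsMultilinear4 {n : ℕ} (R : Curv4 n) : Prop :=
  ∃ L : En n →ₗ[ℝ] En n →ₗ[ℝ] En n →ₗ[ℝ] En n →ₗ[ℝ] ℝ,
    ∀ x y z w, R x y z w = L x y z w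

/-- `R` is an algebraic curvature tensor: a quadrilinear form which is antisymmetric in the
first two arguments, symmetric under exchange of the two pairs, and satisfies the first
Bianchi identity. -/
def IsAlgCurv {n : ℕ} (R : Curv4 n) : Prop :=
  IsMultilinear4 R ∧
  (∀ x y z w, R x y z w = -R y x z w) ∧
  (∀ x y z w, R x y z w = R z w x y) ∧
  (∀ x y z w, R x y z w + R y z x w + R z x y w = 0)

/-- The Ricci curvature `Ric(R)(x,z) = ∑ₚ R(x,eₚ,z,eₚ)`. -/
def ric {n : ℕ} (R : Curv4 n) : Bil n :=
  fun x z => ∑ p, R x (stdB n p) z (stdB n p)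

/-- The scalar curvature `scal(R) = ∑ᵢ Ric(R)(eᵢ,eᵢ)`. -/
def scal {n : ℕ} (R : Curv4 n) : ℝ :=
  ∑ i, ric R (stdB n i) (stdB n i)

/-- The identity (the standard inner product) as a bilinear form. -/
def idB (n : ℕ) : Bil n := fun x z => ⟪x, z⟫

/-- The trace-free Ricci tensor `Ric₀(R) = Ric(R) - (scal(R)/n)·id`. -/
def ric0 {n : ℕ} (R : Curv4 n) : Bil n :=
  fun x z => ric R x z - scal R / n * ⟪x, z⟫

/-- The square of a bilinear form, viewed as a symmetric endomorphism:
`B²(x,z) = ∑ₚ B(x,eₚ)·B(eₚ,z)`. -/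
def bilSq {n : ℕ} (B : Bil n) : Bil n :=
  fun x z => ∑ p, B x (stdB n p) * B (stdB n p) z

/-- The squared Frobenius norm `|B|² = tr(B²)` of a bilinear form. -/
def bilNormSq {n : ℕ} (B : Bil n) : ℝ :=
  ∑ i, bilSq B (stdB n i) (stdB n i)

/-- The Kulkarni–Nomizu product of two bilinear forms:
`(A ∧ B)(x,y,z,w) = A(x,z)B(y,w) - A(x,w)B(y,z) - A(y,z)B(x,w) + A(y,w)B(x,z)`. -/
def KN {n : ℕ} (A B : Bil n) : Curv4 n :=
  fun x y z w => A x z * B y w - A x w * B y z - A y z * B x w + A y w * B x z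

/-- Böhm–Wilking's error term
`D_{a,b}(R) = (2b+(n-2)b²-2a)·Ric₀∧Ric₀ + 2a·Ric∧Ric + 2b²·Ric₀²∧id
  + ((nb²(1-2b)-2(a-b)(1-2b+nb²))/(n(1+2(n-1)a)))·|Ric₀|²·id∧id`. -/
def Dab {n : ℕ} (a b : ℝ) (R : Curv4 n) : Curv4 n :=
  fun x y z w =>
    (2 * b + ((n : ℝ) - 2) * b ^ 2 - 2 * a) * KN (ric0 R) (ric0 R) x y z w +
      2 * a * KN (ric R) (ric R) x y z w +
      2 * b ^ 2 * KN (bilSq (ric0 R)) (idB n) x y z w +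
      ((n : ℝ) * b ^ 2 * (1 - 2 * b) - 2 * (a - b) * (1 - 2 * b + (n : ℝ) * b ^ 2)) /
          ((n : ℝ) * (1 + 2 * ((n : ℝ) - 1) * a)) * bilNormSq (ric0 R) *
        KN (idB n) (idB n) x y z w

/-- Böhm–Wilking's linear map
`l_{a,b}(R) = R + b·Ric(R)∧id + (1/n)(a-b)·scal(R)·id∧id`. -/
def lab {n : ℕ} (a b : ℝ) (R : Curv4 n) : Curv4 n :=
  fun x y z w =>
    R x y z w + b * KN (ric R) (idB n) x y z w +
      1 / (n : ℝ) * (a - b) * scal R * KN (idB n) (idB n) x y z w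

end

/-!
The scalar curvature of a Kulkarni–Nomizu product is `scal (A ∧ B) = 2 (tr A tr B - tr (A B))`,
so `scal (D_{a,b}(R))` is a linear combination of traces of `Ric`, `Ric₀`, `Ric₀²` and `id`.
Since `tr Ric₀ = 0` and `|Ric|² = |Ric₀|² + scal² / n`, everything is expressed through
`|Ric|²`, `scal²` and `|Ric₀|²`, and the identity becomes one of rational functions in `n, a, b`.
-/

open Finset

noncomputable section

variable {n : ℕ}

lemma inner_stdB (i j : Fin n) : ⟪stdB n i, stdB n j⟫ = if i = j then 1 else 0 := by
  simp [stdB, EuclideanSpace.inner_single_left]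

def bilTr (A : Bil n) : ℝ := ∑ i, A (stdB n i) (stdB n i)

def bilMul (A B : Bil n) : Bil n := fun x z => ∑ p, A x (stdB n p) * B (stdB n p) z

lemma scal_eq_bilTr_ric (R : Curv4 n) : scal R = bilTr (ric R) := rfl

lemma bilNormSq_eq_bilTr_bilMul (B : Bil n) : bilNormSq B = bilTr (bilMul B B) := rfl

lemma bilSq_eq_bilMul (B : Bil n) : bilSq B = bilMul B B := rfl

lemma scal_KN (A B : Bil n) : scal (KN A B) = 2 * (bilTr A * bilTr B - bilTr (bilMul A B)) := by
  have swap : ∑ i, ∑ p, A (stdB n p) (stdB n i) * B (stdB n i) (stdB n p) = bilTr (bilMul A B) :=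
    sum_comm
  simp only [scal, ric, KN, sum_add_distrib, sum_sub_distrib, ← mul_sum, ← sum_mul, swap]
  simp only [bilTr, bilMul]
  ring

lemma bilTr_idB : bilTr (idB n) = n := by
  simp only [bilTr, idB, inner_stdB]
  simp

lemma bilTr_bilMul_idB (A : Bil n) : bilTr (bilMul A (idB n)) = bilTr A := by
  simp only [bilTr, bilMul, idB, inner_stdB]
  simp

lemma bilNormSq_idB : bilNormSq (idB n) = n := by
  rw [bilNormSq_eq_bilTr_bilMul, bilTr_bilMul_idB, bilTr_idB]

lemma bilTr_sub_smul_inner (A : Bil n) (c : ℝ) :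
    bilTr (fun x z => A x z - c * ⟪x, z⟫) = bilTr A - n * c := by
  simp only [bilTr, inner_stdB, sum_sub_distrib]
  simp [mul_comm]

lemma bilNormSq_sub_smul_inner (A : Bil n) (c : ℝ) :
    bilNormSq (fun x z => A x z - c * ⟪x, z⟫) = bilNormSq A - 2 * c * bilTr A + n * c ^ 2 := by
  simp only [bilNormSq, bilSq, bilTr, inner_stdB, sub_mul, mul_sub, sum_sub_distrib, mul_ite,
    ite_mul, mul_one, mul_zero, zero_mul, sum_ite_eq, sum_ite_eq', mem_univ, if_true, sum_const,
    card_univ, Fintype.card_fin, nsmul_eq_mul]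
  rw [← mul_sum, ← sum_mul]
  ring

lemma bilTr_ric0 (hn : n ≠ 0) (R : Curv4 n) : bilTr (ric0 R) = 0 := by
  unfold ric0
  rw [bilTr_sub_smul_inner, ← scal_eq_bilTr_ric]
  field_simp
  ring

lemma bilNormSq_ric (hn : n ≠ 0) (R : Curv4 n) :
    bilNormSq (ric R) = bilNormSq (ric0 R) + scal R ^ 2 / n := by
  unfold ric0
  rw [bilNormSq_sub_smul_inner, ← scal_eq_bilTr_ric]
  field_simp
  ring

lemma scal_Dab (a b : ℝ) (R : Curv4 n) :
    scal (Dab a b R) =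
      (2 * b + ((n : ℝ) - 2) * b ^ 2 - 2 * a) * scal (KN (ric0 R) (ric0 R)) +
      2 * a * scal (KN (ric R) (ric R)) +
      2 * b ^ 2 * scal (KN (bilSq (ric0 R)) (idB n)) +
      ((n : ℝ) * b ^ 2 * (1 - 2 * b) - 2 * (a - b) * (1 - 2 * b + (n : ℝ) * b ^ 2)) /
          ((n : ℝ) * (1 + 2 * ((n : ℝ) - 1) * a)) * bilNormSq (ric0 R) *
        scal (KN (idB n) (idB n)) := by
  simp only [scal, ric, Dab, sum_add_distrib, mul_sum]

end

theorem stmt_14_general (n : ℕ) (hn : 2 ≤ n) (a b : ℝ)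
    (hab : 1 + 2 * ((n : ℝ) - 1) * a ≠ 0)
    (R : Curv4 n) :
    scal (Dab a b R) =
      -4 * b * bilNormSq (ric R) +
        4 / (n : ℝ) * (b + ((n : ℝ) - 1) * a) * scal R ^ 2 +
        2 * ((n : ℝ) ^ 2 * b ^ 2 - 2 * ((n : ℝ) - 1) * (a - b) * (1 - 2 * b)) /
            (1 + 2 * ((n : ℝ) - 1) * a) * bilNormSq (ric0 R) := by
  have hn0 : n ≠ 0 := by omega
  simp only [scal_Dab, scal_KN, bilTr_ric0 hn0, bilTr_bilMul_idB, bilTr_idB, bilSq_eq_bilMul,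
    ← bilNormSq_eq_bilTr_bilMul, bilNormSq_idB, ← scal_eq_bilTr_ric]
  rw [bilNormSq_ric hn0]
  have hab' : 1 + 2 * a * ((n : ℝ) - 1) ≠ 0 := by rwa [mul_right_comm]
  field_simp
  ring

/-- for `n ≥ 2`, reals `a, b` with `1+2(n-1)a ≠ 0`, and any algebraic
curvature tensor `R` on `ℝⁿ`,
`scal(D_{a,b}(R)) = -4b·|Ric(R)|² + (4/n)(b+(n-1)a)·scal(R)²
  + (2(n²b²-2(n-1)(a-b)(1-2b))/(1+2(n-1)a))·|Ric₀(R)|²`. -/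
theorem stmt_14 (n : ℕ) (hn : 2 ≤ n) (a b : ℝ)
    (hab : 1 + 2 * ((n : ℝ) - 1) * a ≠ 0)
    (R : Curv4 n) (hR : IsAlgCurv R) :
    scal (Dab a b R) =
      -4 * b * bilNormSq (ric R) +
        4 / (n : ℝ) * (b + ((n : ℝ) - 1) * a) * scal R ^ 2 +
        2 * ((n : ℝ) ^ 2 * b ^ 2 - 2 * ((n : ℝ) - 1) * (a - b) * (1 - 2 * b)) /
            (1 + 2 * ((n : ℝ) - 1) * a) * bilNormSq (ric0 R) :=
  stmt_14_general n hn a b hab R
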